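/- (No bursty transmission without processing cost; energy maximization.) Consider the energy maximization problem with zero processing cost, i.e., with c_{i,k} = (Θ_{i,k}/γ_{i,k})·(e^{2β_{i,k}/Θ_{i,k}} − 1) (ε = 0). Then every optimal policy (β,Θ) satisfies: for all i, k with β_{i,k} > 0, the full epoch is used, Θ_{i,k} = τ_i. -/

import Mathlib

/-- Energy consumed in one epoch on one sub-channel with gain `γ`, processing cost `ε`,
duration `θ` and delivered data `β`: `(θ/γ)(e^{2β/θ} − 1) + θ ε`, taken to be `0`
when `θ = 0`. -/
noncomputable def EpochEnergy (γ ε θ β : ℝ) : ℝ :=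
  if θ = 0 then 0 else θ / γ * (Real.exp (2 * β / θ) - 1) + θ * ε

/-- Feasibility of an energy-maximization policy `(β, Θ)` (data amounts and durations,
indexed by epoch `i ∈ {1,…,I}` and sub-channel `k ∈ {1,…,K}`): nonnegativity,
`Θ i k ≤ τ i`, `β i k = 0` whenever `Θ i k = 0`, the energy causality constraints,
the data causality constraints, and delivery of all data by the deadline. -/
def EnergyFeasible (I K : ℕ) (τ : ℕ → ℝ) (γ : ℕ → ℕ → ℝ) (E B : ℕ → ℝ) (ε : ℝ)
    (β Θ : ℕ → ℕ → ℝ) : Prop :=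
  (∀ i ∈ Finset.Icc 1 I, ∀ k ∈ Finset.Icc 1 K,
      0 ≤ β i k ∧ 0 ≤ Θ i k ∧ Θ i k ≤ τ i ∧ (Θ i k = 0 → β i k = 0)) ∧
  (∀ i ∈ Finset.Icc 1 I,
      ∑ j ∈ Finset.Icc 1 i, ∑ k ∈ Finset.Icc 1 K, EpochEnergy (γ j k) ε (Θ j k) (β j k)
        ≤ ∑ j ∈ Finset.Icc 1 i, E j) ∧
  (∀ i ∈ Finset.Icc 1 (I - 1),
      ∑ j ∈ Finset.Icc 1 i, ∑ k ∈ Finset.Icc 1 K, β j k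
        ≤ ∑ j ∈ Finset.Icc 1 i, B j) ∧
  (∑ j ∈ Finset.Icc 1 I, B j ≤ ∑ j ∈ Finset.Icc 1 I, ∑ k ∈ Finset.Icc 1 K, β j k)

/-- Total energy consumed by a policy `(β, Θ)`. -/
noncomputable def TotalEnergy (I K : ℕ) (γ : ℕ → ℕ → ℝ) (ε : ℝ)
    (β Θ : ℕ → ℕ → ℝ) : ℝ :=
  ∑ i ∈ Finset.Icc 1 I, ∑ k ∈ Finset.Icc 1 K, EpochEnergy (γ i k) ε (Θ i k) (β i k)

/-- A policy is optimal for the energy maximization problem if it is feasible and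
minimizes the total consumed energy (equivalently, maximizes the remaining energy)
among feasible policies. -/
def EnergyOptimal (I K : ℕ) (τ : ℕ → ℝ) (γ : ℕ → ℕ → ℝ) (E B : ℕ → ℝ) (ε : ℝ)
    (β Θ : ℕ → ℕ → ℝ) : Prop :=
  EnergyFeasible I K τ γ E B ε β Θ ∧
  ∀ β' Θ' : ℕ → ℕ → ℝ, EnergyFeasible I K τ γ E B ε β' Θ' →
    TotalEnergy I K γ ε β Θ ≤ TotalEnergy I K γ ε β' Θ'


lemma slope_aux {s t : ℝ} (hs : 0 < s) (hst : s < t) :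
    (Real.exp s - 1) / s < (Real.exp t - 1) / t := by
  rw [div_lt_div_iff₀ hs (hs.trans hst)]
  have h := strictConvexOn_exp.slope_strict_mono_adjacent (Set.mem_univ 0)
    (Set.mem_univ t) hs hst
  rw [Real.exp_zero] at h
  rw [div_lt_div_iff₀ (by linarith) (by linarith)] at h
  nlinarith

lemma energy_strict_anti {γ b θ₁ θ₂ : ℝ} (hγ : 0 < γ) (hb : 0 < b)
    (h1 : 0 < θ₁) (h12 : θ₁ < θ₂) :
    θ₂ / γ * (Real.exp (2 * b / θ₂) - 1) < θ₁ / γ * (Real.exp (2 * b / θ₁) - 1) := by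
  have h2 : 0 < θ₂ := h1.trans h12
  have hb2 : (0:ℝ) < 2 * b := by linarith
  have hs : 0 < 2 * b / θ₂ := div_pos hb2 h2
  have hst : 2 * b / θ₂ < 2 * b / θ₁ := div_lt_div_of_pos_left hb2 h1 h12
  have key := slope_aux hs hst
  have e1 : θ₂ / γ * (Real.exp (2 * b / θ₂) - 1)
      = (2 * b / γ) * ((Real.exp (2 * b / θ₂) - 1) / (2 * b / θ₂)) := by
    set A := Real.exp (2 * b / θ₂); field_simp
  have e2 : θ₁ / γ * (Real.exp (2 * b / θ₁) - 1)
      = (2 * b / γ) * ((Real.exp (2 * b / θ₁) - 1) / (2 * b / θ₁)) := by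
    set A := Real.exp (2 * b / θ₁); field_simp
  rw [e1, e2]
  exact mul_lt_mul_of_pos_left key (div_pos hb2 hγ)

lemma epoch_energy_strict_anti {γ b θ₁ θ₂ : ℝ} (hγ : 0 < γ) (hb : 0 < b)
    (h1 : 0 < θ₁) (h12 : θ₁ < θ₂) :
    EpochEnergy γ 0 θ₂ b < EpochEnergy γ 0 θ₁ b := by
  rw [EpochEnergy, EpochEnergy, if_neg (h1.trans h12).ne' , if_neg h1.ne']
  simp only [mul_zero, add_zero]
  exact energy_strict_anti hγ hb h1 h12

/-- No bursty transmission without processing cost (energy maximization): with `ε = 0`,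
every optimal policy uses the full epoch whenever it transmits nonzero data. -/
theorem energy_no_bursty_transmission_zero_cost (I K : ℕ) (hI : 1 ≤ I) (hK : 1 ≤ K)
    (τ : ℕ → ℝ) (hτ : ∀ i ∈ Finset.Icc 1 I, 0 < τ i)
    (γ : ℕ → ℕ → ℝ) (hγ : ∀ i ∈ Finset.Icc 1 I, ∀ k ∈ Finset.Icc 1 K, 0 < γ i k)
    (E : ℕ → ℝ) (hE : ∀ i ∈ Finset.Icc 1 I, 0 ≤ E i)
    (B : ℕ → ℝ) (hB : ∀ i ∈ Finset.Icc 1 I, 0 ≤ B i)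
    (β Θ : ℕ → ℕ → ℝ) (hopt : EnergyOptimal I K τ γ E B 0 β Θ) :
    ∀ i ∈ Finset.Icc 1 I, ∀ k ∈ Finset.Icc 1 K, 0 < β i k → Θ i k = τ i := by
  intro i hi k hk hβpos
  obtain ⟨hfeas, hoptmin⟩ := hopt
  obtain ⟨hbnd, hEn, hDa, hDel⟩ := hfeas
  obtain ⟨hβ0, hΘ0, hΘτ, hzero⟩ := hbnd i hi k hk
  by_contra hne
  have hΘlt : Θ i k < τ i := lt_of_le_of_ne hΘτ hne
  have hΘpos : 0 < Θ i k := by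
    rcases hΘ0.lt_or_eq with h | h
    · exact h
    · exact absurd (hzero h.symm) (by linarith)
  set Θ' : ℕ → ℕ → ℝ := fun j l => if j = i ∧ l = k then τ i else Θ j l with hΘ'def
  have hΘ'ik : Θ' i k = τ i := by simp [hΘ'def]
  have hΘ'ne : ∀ j l, ¬(j = i ∧ l = k) → Θ' j l = Θ j l := by
    intro j l h; simp [hΘ'def, h]
  have hstrict : EpochEnergy (γ i k) 0 (Θ' i k) (β i k)
      < EpochEnergy (γ i k) 0 (Θ i k) (β i k) := by
    rw [hΘ'ik]
    exact epoch_energy_strict_anti (hγ i hi k hk) hβpos hΘpos hΘlt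
  have hkey : ∀ j ∈ Finset.Icc 1 I, ∀ l ∈ Finset.Icc 1 K,
      EpochEnergy (γ j l) 0 (Θ' j l) (β j l) ≤ EpochEnergy (γ j l) 0 (Θ j l) (β j l) := by
    intro j hj l hl
    by_cases h : j = i ∧ l = k
    · obtain ⟨rfl, rfl⟩ := h
      exact hstrict.le
    · rw [hΘ'ne j l h]
  have hfeas' : EnergyFeasible I K τ γ E B 0 β Θ' := by
    refine ⟨?_, ?_, hDa, hDel⟩
    · intro j hj l hl
      obtain ⟨h1, h2, h3, h4⟩ := hbnd j hj l hl
      by_cases h : j = i ∧ l = k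
      · obtain ⟨rfl, rfl⟩ := h
        rw [hΘ'ik]
        exact ⟨h1, (hτ j hj).le, le_refl _, fun h0 => absurd h0 (hτ j hj).ne'⟩
      · rw [hΘ'ne j l h]
        exact ⟨h1, h2, h3, h4⟩
    · intro i' hi'
      refine le_trans ?_ (hEn i' hi')
      apply Finset.sum_le_sum
      intro j hj
      have hjI : j ∈ Finset.Icc 1 I := by
        simp only [Finset.mem_Icc] at hj hi' ⊢
        exact ⟨hj.1, hj.2.trans hi'.2⟩
      exact Finset.sum_le_sum fun l hl => hkey j hjI l hl
  have hlt : TotalEnergy I K γ 0 β Θ' < TotalEnergy I K γ 0 β Θ := by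
    unfold TotalEnergy
    apply Finset.sum_lt_sum
    · intro j hj
      exact Finset.sum_le_sum fun l hl => hkey j hj l hl
    · refine ⟨i, hi, ?_⟩
      apply Finset.sum_lt_sum
      · intro l hl; exact hkey i hi l hl
      · exact ⟨k, hk, hstrict⟩
  exact absurd (hoptmin β Θ' hfeas') (not_le.mpr hlt)
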